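/- arXiv:2102.11383 — 5 statements merged into one kernel-verified Lean document; each statement's English description precedes it below -/
import Mathlib

section
/- Derivative of the time-dependent GEL DG mass-matrix entries (key computation in Theorem 3.3): let x₋ < x₊ be real numbers with Δx = x₊ − x₋, let ν₋, ν₊, α_j, T be real numbers, and define g(t) = x₋ + (t − T)·ν₋, h(t) = x₊ + (t − T)·ν₊, L(t) = h(t) − g(t), and the affine velocity field α(x,t) = (ν₋·(h(t) − x) + ν₊·(x − g(t)))/L(t). Let Ψ_m, Ψ_i : ℝ → ℝ be continuously differentiable and set ψ̃_m(x,t) = Ψ_m( x₋ + Δx·(x − g(t))/L(t) ) and ψ_i(x,t) = Ψ_i( x − α_j·(t − T) ). Then on any open time interval J containing T on which L(t) > 0, the function t ↦ (1/L(t))·∫_{g(t)}^{h(t)} ψ̃_m(x,t)·ψ_i(x,t) dx is differentiable with derivative (1/L(t))·∫_{g(t)}^{h(t)} (α(x,t) − α_j)·ψ̃_m(x,t)·∂_x ψ_i(x,t) dx. -/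
/-!
Pull the cell average back to the fixed reference cell `[xm, xp]` through the affine mesh map.
With `v` the affine interpolation of the endpoint velocities `νm, νp` on `[xm, xp]`, the mesh map
at time `s` sends `y` to `y + (s - T) * v y`, and the mesh velocity `α` at that point is `v y`.
The average becomes `(1 / Δx) ∫ Ψm y * Ψi (y + (s - T) * (v y - αj)) dy` over a fixed interval,
which is differentiated under the integral sign; pushing the result forward again gives the claim.
-/

open Set Filter Metric intervalIntegral

theorem hasDerivAt_intervalIntegral_of_continuous_deriv {E : Type*} [NormedAddCommGroup E]
    [NormedSpace ℝ E] {F F' : ℝ → ℝ → E} {a b t : ℝ} (hF : ∀ s, Continuous (F s))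
    (hF' : Continuous (Function.uncurry F')) (hderiv : ∀ s y, HasDerivAt (F · y) (F' s y) s) :
    HasDerivAt (fun s => ∫ y in a..b, F s y) (∫ y in a..b, F' t y) t := by
  obtain ⟨M, hM⟩ := ((isCompact_closedBall t 1).prod isCompact_uIcc).exists_bound_of_continuousOn
    (s := closedBall t 1 ×ˢ uIcc a b) hF'.continuousOn
  exact (hasDerivAt_integral_of_dominated_loc_of_deriv_le (ball_mem_nhds t one_pos)
    (.of_forall fun s => (hF s).aestronglyMeasurable) ((hF t).intervalIntegrable a b)
    (hF'.uncurry_left t).aestronglyMeasurable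
    (.of_forall fun y hy s hs => hM (s, y) ⟨ball_subset_closedBall hs, uIoc_subset_uIcc hy⟩)
    intervalIntegrable_const (.of_forall fun y _ s _ => hderiv s y)).2

theorem hasDerivAt_intervalIntegral_mul_comp_drift {f g c : ℝ → ℝ} (hf : Continuous f)
    (hg : ContDiff ℝ 1 g) (hc : Continuous c) (a b T t : ℝ) :
    HasDerivAt (fun s => ∫ y in a..b, f y * g (y + (s - T) * c y))
      (∫ y in a..b, f y * (deriv g (y + (t - T) * c y) * c y)) t := by
  have hg' : Continuous (deriv g) := hg.continuous_deriv le_rfl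
  refine hasDerivAt_intervalIntegral_of_continuous_deriv
    (F := fun s y => f y * g (y + (s - T) * c y))
    (F' := fun s y => f y * (deriv g (y + (s - T) * c y) * c y)) (fun s => ?_) ?_ fun s y => ?_
  · exact hf.mul (hg.continuous.comp (by fun_prop))
  · exact (hf.comp continuous_snd).mul ((hg'.comp (by fun_prop)).mul (hc.comp continuous_snd))
  · have hdrift : HasDerivAt (fun s => y + (s - T) * c y) (c y) s := by
      simpa using ((hasDerivAt_id s).sub_const T).mul_const (c y) |>.const_add y
    exact ((hg.differentiable one_ne_zero _).hasDerivAt.comp s hdrift).const_mul (f y)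

/-- The paper's basis `ψ̃` at time `s` is `Ψm ∘ cellMap (g s) (h s) xm xp`. -/
noncomputable def cellMap (a b u v y : ℝ) : ℝ := u + (v - u) * (y - a) / (b - a)

section CellMap

variable {a b u v : ℝ}

theorem one_div_mul_integral_eq_integral_comp_cellMap (f : ℝ → ℝ) (hab : a ≠ b) (huv : u ≠ v) :
    1 / (v - u) * ∫ x in u..v, f x = 1 / (b - a) * ∫ y in a..b, f (cellMap a b u v y) := by
  have hba : b - a ≠ 0 := sub_ne_zero.2 hab.symm
  have hvu : v - u ≠ 0 := sub_ne_zero.2 huv.symm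
  set k := (v - u) / (b - a)
  have key := smul_integral_comp_mul_add (a := a) (b := b) f k (u - k * a)
  have hleft : k * a + (u - k * a) = u := by ring
  have hright : k * b + (u - k * a) = v := by simp only [k]; field_simp; ring
  have hmap : cellMap a b u v = fun y => k * y + (u - k * a) := by
    funext y; simp only [cellMap, k]; ring
  rw [hleft, hright, smul_eq_mul] at key
  rw [hmap, ← key, ← mul_assoc]
  congr 1
  simp only [k]
  field_simp

theorem cellMap_cellMap (hab : a ≠ b) (huv : u ≠ v) (y : ℝ) :
    cellMap u v a b (cellMap a b u v y) = y := by
  have hba : b - a ≠ 0 := sub_ne_zero.2 hab.symm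
  have hvu : v - u ≠ 0 := sub_ne_zero.2 huv.symm
  simp only [cellMap]
  field_simp
  ring

theorem cellMap_moving_endpoints (hab : a ≠ b) (νa νb τ y : ℝ) :
    cellMap a b (a + τ * νa) (b + τ * νb) y = y + τ * cellMap a b νa νb y := by
  have hba : b - a ≠ 0 := sub_ne_zero.2 hab.symm
  simp only [cellMap]
  field_simp
  ring

theorem endpoint_interpolation_cellMap (hab : a ≠ b) (huv : u ≠ v) (νa νb y : ℝ) :
    (νa * (v - cellMap a b u v y) + νb * (cellMap a b u v y - u)) / (v - u) =
      cellMap a b νa νb y := by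
  have hba : b - a ≠ 0 := sub_ne_zero.2 hab.symm
  have hvu : v - u ≠ 0 := sub_ne_zero.2 huv.symm
  simp only [cellMap]
  field_simp
  ring

end CellMap

theorem gel_dg_mass_matrix_derivative_general
    (xm xp : ℝ) (hx : xm < xp) (νm νp αj T : ℝ)
    (Ψm Ψi : ℝ → ℝ) (hΨm : ContDiff ℝ 1 Ψm) (hΨi : ContDiff ℝ 1 Ψi)
    (g h L : ℝ → ℝ) (α : ℝ → ℝ → ℝ)
    (hg : g = fun t => xm + (t - T) * νm)
    (hh : h = fun t => xp + (t - T) * νp)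
    (hL : L = fun t => h t - g t)
    (hα : α = fun x t => (νm * (h t - x) + νp * (x - g t)) / L t)
    (ψbasis ψtest : ℝ → ℝ → ℝ)
    (hψb : ψbasis = fun x t => Ψm (xm + (xp - xm) * (x - g t) / L t))
    (hψt : ψtest = fun x t => Ψi (x - αj * (t - T)))
    (J : Set ℝ) (hJopen : IsOpen J) (hLpos : ∀ t ∈ J, 0 < L t) :
    ∀ t ∈ J, HasDerivAt
      (fun s => (1 / L s) * ∫ x in g s..h s, ψbasis x s * ψtest x s)
      ((1 / L t) * ∫ x in g t..h t,
        (α x t - αj) * ψbasis x t * deriv (fun y => ψtest y t) x) t := by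
  intro t ht
  have hab : xm ≠ xp := hx.ne
  have hLs (s : ℝ) : L s = h s - g s := congrFun hL s
  have hcell (s : ℝ) (hs : s ∈ J) : g s ≠ h s := (by linarith [hLs s, hLpos s hs] : g s < h s).ne
  set v := cellMap xm xp νm νp
  have hbasis (s : ℝ) (hs : s ∈ J) (y : ℝ) :
      xm + (xp - xm) * (cellMap xm xp (g s) (h s) y - g s) / L s = y := by
    rw [hLs]; exact cellMap_cellMap hab (hcell s hs) y
  have htest (s y : ℝ) :
      cellMap xm xp (g s) (h s) y - αj * (s - T) = y + (s - T) * (v y - αj) := by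
    rw [hg, hh, cellMap_moving_endpoints hab]; ring
  have hmean (s : ℝ) (hs : s ∈ J) : 1 / L s * ∫ x in g s..h s, ψbasis x s * ψtest x s =
      1 / (xp - xm) * ∫ y in xm..xp, Ψm y * Ψi (y + (s - T) * (v y - αj)) := by
    rw [hLs, one_div_mul_integral_eq_integral_comp_cellMap _ hab (hcell s hs)]
    simp only [hψb, hψt, hbasis s hs, htest]
  have hmean_deriv : 1 / L t * ∫ x in g t..h t, (α x t - αj) * ψbasis x t * deriv (ψtest · t) x =
      1 / (xp - xm) * ∫ y in xm..xp, Ψm y * (deriv Ψi (y + (t - T) * (v y - αj)) * (v y - αj)) := by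
    rw [hLs, one_div_mul_integral_eq_integral_comp_cellMap _ hab (hcell t ht)]
    simp only [hψb, hψt, hbasis t ht, deriv_comp_sub_const, htest]
    simp only [hα, hLs, endpoint_interpolation_cellMap hab (hcell t ht)]
    exact congrArg _ (integral_congr fun y _ => by ring)
  have hv : Continuous fun y => v y - αj := by simp only [v, cellMap]; fun_prop
  rw [hmean_deriv]
  exact ((hasDerivAt_intervalIntegral_mul_comp_drift hΨm.continuous hΨi hv xm xp T t).const_mul
    _).congr_of_eventuallyEq (eventually_of_mem (hJopen.mem_nhds ht) hmean)

/-- Derivative of the time-dependent GEL DG mass-matrix entries: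
the key computation in Theorem 3.3 (equivalence of semi-discrete GEL DG
and EL DG). -/
theorem gel_dg_mass_matrix_derivative
    (xm xp : ℝ) (hx : xm < xp) (νm νp αj T : ℝ)
    (Ψm Ψi : ℝ → ℝ) (hΨm : ContDiff ℝ 1 Ψm) (hΨi : ContDiff ℝ 1 Ψi)
    (g h L : ℝ → ℝ) (α : ℝ → ℝ → ℝ)
    (hg : g = fun t => xm + (t - T) * νm)
    (hh : h = fun t => xp + (t - T) * νp)
    (hL : L = fun t => h t - g t)
    (hα : α = fun x t => (νm * (h t - x) + νp * (x - g t)) / L t)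
    (ψbasis ψtest : ℝ → ℝ → ℝ)
    (hψb : ψbasis = fun x t => Ψm (xm + (xp - xm) * (x - g t) / L t))
    (hψt : ψtest = fun x t => Ψi (x - αj * (t - T)))
    (J : Set ℝ) (hJopen : IsOpen J) (hTJ : T ∈ J) (hLpos : ∀ t ∈ J, 0 < L t) :
    ∀ t ∈ J, HasDerivAt
      (fun s => (1 / L s) * ∫ x in g s..h s, ψbasis x s * ψtest x s)
      ((1 / L t) * ∫ x in g t..h t,
        (α x t - αj) * ψbasis x t * deriv (fun y => ψtest y t) x) t :=
  gel_dg_mass_matrix_derivative_general xm xp hx νm νp αj T Ψm Ψi hΨm hΨi g h L α hg hh hL hα ψbasis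
    ψtest hψb hψt J hJopen hLpos
end

section
/- The pulled-back basis functions solve the EL DG adjoint problem: let x₋ < x₊ be real numbers with Δx = x₊ − x₋, let ν₋, ν₊, T be real numbers, and define g(t) = x₋ + (t − T)·ν₋, h(t) = x₊ + (t − T)·ν₊, L(t) = h(t) − g(t), and α(x,t) = (ν₋·(h(t) − x) + ν₊·(x − g(t)))/L(t). Let Ψ : ℝ → ℝ be continuously differentiable and define ψ̃(x,t) = Ψ( x₋ + Δx·(x − g(t))/L(t) ). Then on any open time interval J containing T on which L(t) > 0, ψ̃ satisfies the transport equation ∂_t ψ̃(x,t) + α(x,t)·∂_x ψ̃(x,t) = 0 for all x ∈ ℝ and t ∈ J, with final data ψ̃(x,T) = Ψ(x). -/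
/-!
Write `ψ̃(x,t) = Ψ(ξ(x,t))` with reference coordinate `ξ = x₋ + Δx·(x − g)/(h − g)`. The relative
position `(x − g)/(h − g)` of a point in a cell with moving endpoints is constant along the
characteristics of the interpolated endpoint velocity `α`: its time derivative is `−α` times its
space derivative `1/(h − g)`. The chain rule transfers this to `Ψ ∘ ξ`.
-/

theorem hasDerivAt_const_add_sub_mul (a T ν t : ℝ) :
    HasDerivAt (fun s => a + (s - T) * ν) ν t := by
  simpa using (((hasDerivAt_id t).sub_const T).mul_const ν).const_add a

theorem hasDerivAt_relPos_time {g h : ℝ → ℝ} {g' h' t : ℝ} (x : ℝ)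
    (hg : HasDerivAt g g' t) (hh : HasDerivAt h h' t) (hgh : h t - g t ≠ 0) :
    HasDerivAt (fun s => (x - g s) / (h s - g s))
      (-((g' * (h t - x) + h' * (x - g t)) / (h t - g t)) * (1 / (h t - g t))) t := by
  refine ((hg.const_sub x).div (hh.sub hg) hgh).congr_deriv ?_
  simp only [Pi.sub_apply]
  field_simp
  ring

theorem hasDerivAt_relPos_space (x a L : ℝ) :
    HasDerivAt (fun y => (y - a) / L) (1 / L) x := by
  simpa using ((hasDerivAt_id x).sub_const a).div_const L

theorem deriv_comp_add_mul_deriv_comp_eq_zero {Ψ : ℝ → ℝ} {ξ : ℝ → ℝ → ℝ} {x t a c : ℝ}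
    (hΨ : DifferentiableAt ℝ Ψ (ξ x t)) (hξx : HasDerivAt (fun y => ξ y t) c x)
    (hξt : HasDerivAt (fun s => ξ x s) (-a * c) t) :
    deriv (fun s => Ψ (ξ x s)) t + a * deriv (fun y => Ψ (ξ y t)) x = 0 := by
  have hψt : HasDerivAt (fun s => Ψ (ξ x s)) _ t := hΨ.hasDerivAt.comp t hξt
  have hψx : HasDerivAt (fun y => Ψ (ξ y t)) _ x := hΨ.hasDerivAt.comp x hξx
  rw [hψt.deriv, hψx.deriv]
  ring

theorem pulled_back_basis_solves_adjoint_general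
    (xm xp : ℝ) (hx : xm < xp) (νm νp T : ℝ)
    (g h L : ℝ → ℝ) (α : ℝ → ℝ → ℝ)
    (hg : g = fun t => xm + (t - T) * νm)
    (hh : h = fun t => xp + (t - T) * νp)
    (hL : L = fun t => h t - g t)
    (hα : α = fun x t => (νm * (h t - x) + νp * (x - g t)) / L t)
    (Ψ : ℝ → ℝ) (hΨ : ContDiff ℝ 1 Ψ)
    (ψ : ℝ → ℝ → ℝ)
    (hψ : ψ = fun x t => Ψ (xm + (xp - xm) * (x - g t) / L t))
    (J : Set ℝ) (hLpos : ∀ t ∈ J, 0 < L t) :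
    (∀ x : ℝ, ∀ t ∈ J,
      deriv (fun s => ψ x s) t + α x t * deriv (fun y => ψ y t) x = 0) ∧
    (∀ x : ℝ, ψ x T = Ψ x) := by
  simp only [mul_div_assoc] at hψ
  subst hψ hα hL
  refine ⟨fun x t ht => ?_, fun x => ?_⟩
  · have hgd : HasDerivAt g νm t := hg ▸ hasDerivAt_const_add_sub_mul xm T νm t
    have hhd : HasDerivAt h νp t := hh ▸ hasDerivAt_const_add_sub_mul xp T νp t
    refine deriv_comp_add_mul_deriv_comp_eq_zero
      (ξ := fun y s => xm + (xp - xm) * ((y - g s) / (h s - g s)))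
      (hΨ.differentiable one_ne_zero _)
      (((hasDerivAt_relPos_space x (g t) (h t - g t)).const_mul (xp - xm)).const_add xm) ?_
    simpa [mul_left_comm] using
      ((hasDerivAt_relPos_time x hgd hhd (hLpos t ht).ne').const_mul (xp - xm)).const_add xm
  · have hΔ : xp - xm ≠ 0 := sub_ne_zero.mpr hx.ne'
    simp [hg, hh, mul_div_cancel₀ _ hΔ]

/-- The pulled-back basis functions solve the EL DG adjoint problem
`ψ̃ₜ + α(x,t)·ψ̃ₓ = 0` with final data `ψ̃(·,T) = Ψ`. -/
theorem pulled_back_basis_solves_adjoint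
    (xm xp : ℝ) (hx : xm < xp) (νm νp T : ℝ)
    (g h L : ℝ → ℝ) (α : ℝ → ℝ → ℝ)
    (hg : g = fun t => xm + (t - T) * νm)
    (hh : h = fun t => xp + (t - T) * νp)
    (hL : L = fun t => h t - g t)
    (hα : α = fun x t => (νm * (h t - x) + νp * (x - g t)) / L t)
    (Ψ : ℝ → ℝ) (hΨ : ContDiff ℝ 1 Ψ)
    (ψ : ℝ → ℝ → ℝ)
    (hψ : ψ = fun x t => Ψ (xm + (xp - xm) * (x - g t) / L t))
    (J : Set ℝ) (hJopen : IsOpen J) (hTJ : T ∈ J) (hLpos : ∀ t ∈ J, 0 < L t) :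
    (∀ x : ℝ, ∀ t ∈ J,
      deriv (fun s => ψ x s) t + α x t * deriv (fun y => ψ y t) x = 0) ∧
    (∀ x : ℝ, ψ x T = Ψ x) :=
  pulled_back_basis_solves_adjoint_general xm xp hx νm νp T g h L α hg hh hL hα Ψ hΨ ψ hψ J hLpos
end

section
/- DGCL computation for the linear test function (case Ψ = x of Proposition 4.1): let x₋ < x₊, and let Δt, ν₋, ν₊, α be real numbers; set x⁎₋ = x₋ − ν₋·Δt, x⁎₊ = x₊ − ν₊·Δt, and for a continuous function Ψ : ℝ → ℝ define R(Ψ) = ∫_{x⁎₋}^{x⁎₊} Ψ(x + α·Δt) dx − Δt·(α − ν₊)·Ψ(x⁎₊ + α·Δt) + Δt·(α − ν₋)·Ψ(x⁎₋ + α·Δt). Then for Ψ(x) = x one has R(Ψ) − ∫_{x₋}^{x₊} x dx = (Δt²/2)·( (α − ν₋)² − (α − ν₊)² ). In particular, if ν₋ = ν₊ then R(Ψ) = ∫_{x₋}^{x₊} Ψ(x) dx for every affine function Ψ, i.e. the forward-Euler GEL DG scheme satisfies the DGCL for P¹ test functions. -/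
/-! For an affine test function `Ψ x = β₀ + β₁ x` every term of `R(Ψ)` is an explicit polynomial
in the data. The constant part is reproduced exactly, since the two flux terms compensate the
motion of the endpoints; the linear part leaves the defect
`β₁ · (Δt²/2) · ((α − ν₋)² − (α − ν₊)²)`, which vanishes when `ν₋ = ν₊`. -/

/-- The forward-Euler GEL update of the moment against `Ψ` on the upstream cell `[xsm, xsp]`. -/
noncomputable def gelMoment (xsm xsp Δt νm νp α : ℝ) (Ψ : ℝ → ℝ) : ℝ :=
  (∫ x in xsm..xsp, Ψ (x + α * Δt))
    - Δt * (α - νp) * Ψ (xsp + α * Δt) + Δt * (α - νm) * Ψ (xsm + α * Δt)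

theorem integral_affine (a b c d : ℝ) :
    ∫ x in a..b, (c + d * x) = c * (b - a) + d * (b ^ 2 - a ^ 2) / 2 := by
  rw [intervalIntegral.integral_add intervalIntegrable_const
      (intervalIntegral.intervalIntegrable_id.const_mul d),
    intervalIntegral.integral_const_mul, integral_id, intervalIntegral.integral_const,
    smul_eq_mul]
  ring

theorem gelMoment_affine_sub_integral (xm xp Δt νm νp α β₀ β₁ : ℝ) :
    gelMoment (xm - νm * Δt) (xp - νp * Δt) Δt νm νp α (fun x => β₀ + β₁ * x)
        - ∫ x in xm..xp, (β₀ + β₁ * x)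
      = β₁ * (Δt ^ 2 / 2 * ((α - νm) ^ 2 - (α - νp) ^ 2)) := by
  have hshift : (fun x => β₀ + β₁ * (x + α * Δt)) = fun x => (β₀ + β₁ * (α * Δt)) + β₁ * x := by
    funext x; ring
  simp only [gelMoment, hshift, integral_affine]
  ring

theorem dgcl_linear_test_function_general
    (xm xp : ℝ) (Δt νm νp α : ℝ)
    (xsm xsp : ℝ) (hxsm : xsm = xm - νm * Δt) (hxsp : xsp = xp - νp * Δt)
    (R : (ℝ → ℝ) → ℝ)
    (hR : R = fun Ψ => (∫ x in xsm..xsp, Ψ (x + α * Δt))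
      - Δt * (α - νp) * Ψ (xsp + α * Δt) + Δt * (α - νm) * Ψ (xsm + α * Δt)) :
    (R (fun x => x) - (∫ x in xm..xp, x)
        = Δt ^ 2 / 2 * ((α - νm) ^ 2 - (α - νp) ^ 2)) ∧
    (νm = νp → ∀ β0 β1 : ℝ,
      R (fun x => β0 + β1 * x) = ∫ x in xm..xp, (β0 + β1 * x)) := by
  have hR' : R = gelMoment (xm - νm * Δt) (xp - νp * Δt) Δt νm νp α := by
    subst hxsm hxsp hR; rfl
  subst hR'
  constructor
  · simpa using gelMoment_affine_sub_integral xm xp Δt νm νp α 0 1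
  · rintro rfl β₀ β₁
    have hdefect := gelMoment_affine_sub_integral xm xp Δt νm νm α β₀ β₁
    rwa [sub_self, mul_zero, mul_zero, sub_eq_zero] at hdefect

/-- DGCL computation for the linear test function (case Ψ = x of
Proposition 4.1): the defect is `(Δt²/2)·((α − ν₋)² − (α − ν₊)²)`, and in
particular the DGCL holds for every affine test function when `ν₋ = ν₊`. -/
theorem dgcl_linear_test_function
    (xm xp : ℝ) (hx : xm < xp) (Δt νm νp α : ℝ)
    (xsm xsp : ℝ) (hxsm : xsm = xm - νm * Δt) (hxsp : xsp = xp - νp * Δt)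
    (R : (ℝ → ℝ) → ℝ)
    (hR : R = fun Ψ => (∫ x in xsm..xsp, Ψ (x + α * Δt))
      - Δt * (α - νp) * Ψ (xsp + α * Δt) + Δt * (α - νm) * Ψ (xsm + α * Δt)) :
    (R (fun x => x) - (∫ x in xm..xp, x)
        = Δt ^ 2 / 2 * ((α - νm) ^ 2 - (α - νp) ^ 2)) ∧
    (νm = νp → ∀ β0 β1 : ℝ,
      R (fun x => β0 + β1 * x) = ∫ x in xm..xp, (β0 + β1 * x)) :=
  dgcl_linear_test_function_general xm xp Δt νm νp α xsm xsp hxsm hxsp R hR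
end

section
/- DGCL computation for the quadratic test function on a centered cell (case Ψ = x² of Proposition 4.1): let Δx > 0 and let Δt, ν₋, ν₊, α be real numbers; take the centered cell x₋ = −Δx/2, x₊ = Δx/2, set x⁎₋ = x₋ − ν₋·Δt, x⁎₊ = x₊ − ν₊·Δt, and for a continuous function Ψ : ℝ → ℝ define R(Ψ) = ∫_{x⁎₋}^{x⁎₊} Ψ(x + α·Δt) dx − Δt·(α − ν₊)·Ψ(x⁎₊ + α·Δt) + Δt·(α − ν₋)·Ψ(x⁎₋ + α·Δt). Then for Ψ(x) = x² one has R(Ψ) − Δx³/12 = −(Δx·Δt²/2)·( (α − ν₊)² + (α − ν₋)² ) + (2Δt³/3)·( (α − ν₋)³ − (α − ν₊)³ ). In particular this difference vanishes when ν₋ = ν₊ = α. -/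
theorem intervalIntegral.integral_add_const_pow (a b c : ℝ) (n : ℕ) :
    ∫ x in a..b, (x + c) ^ n = ((b + c) ^ (n + 1) - (a + c) ^ (n + 1)) / (n + 1) := by
  rw [intervalIntegral.integral_comp_add_right (· ^ n) c, integral_pow]

theorem dgcl_quadratic_test_function_general
    (Δx : ℝ) (Δt νm νp α : ℝ)
    (xm xp : ℝ) (hxm : xm = -(Δx / 2)) (hxp : xp = Δx / 2)
    (xsm xsp : ℝ) (hxsm : xsm = xm - νm * Δt) (hxsp : xsp = xp - νp * Δt)
    (R : (ℝ → ℝ) → ℝ)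
    (hR : R = fun Ψ => (∫ x in xsm..xsp, Ψ (x + α * Δt))
      - Δt * (α - νp) * Ψ (xsp + α * Δt) + Δt * (α - νm) * Ψ (xsm + α * Δt)) :
    (R (fun x => x ^ 2) - Δx ^ 3 / 12
        = -(Δx * Δt ^ 2 / 2) * ((α - νp) ^ 2 + (α - νm) ^ 2)
          + 2 * Δt ^ 3 / 3 * ((α - νm) ^ 3 - (α - νp) ^ 3)) ∧
    (νm = νp → νp = α → R (fun x => x ^ 2) - Δx ^ 3 / 12 = 0) := by
  have residual : R (fun x => x ^ 2) - Δx ^ 3 / 12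
      = -(Δx * Δt ^ 2 / 2) * ((α - νp) ^ 2 + (α - νm) ^ 2)
        + 2 * Δt ^ 3 / 3 * ((α - νm) ^ 3 - (α - νp) ^ 3) := by
    subst hR hxm hxp hxsm hxsp
    simp only [intervalIntegral.integral_add_const_pow]
    ring
  refine ⟨residual, fun hνm hνp => ?_⟩
  rw [residual, hνm, hνp]
  ring

/-- DGCL computation for the quadratic test function on a centered cell
(case Ψ = x² of Proposition 4.1). -/
theorem dgcl_quadratic_test_function
    (Δx : ℝ) (hΔx : 0 < Δx) (Δt νm νp α : ℝ)
    (xm xp : ℝ) (hxm : xm = -(Δx / 2)) (hxp : xp = Δx / 2)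
    (xsm xsp : ℝ) (hxsm : xsm = xm - νm * Δt) (hxsp : xsp = xp - νp * Δt)
    (R : (ℝ → ℝ) → ℝ)
    (hR : R = fun Ψ => (∫ x in xsm..xsp, Ψ (x + α * Δt))
      - Δt * (α - νp) * Ψ (xsp + α * Δt) + Δt * (α - νm) * Ψ (xsm + α * Δt)) :
    (R (fun x => x ^ 2) - Δx ^ 3 / 12
        = -(Δx * Δt ^ 2 / 2) * ((α - νp) ^ 2 + (α - νm) ^ 2)
          + 2 * Δt ^ 3 / 3 * ((α - νm) ^ 3 - (α - νp) ^ 3)) ∧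
    (νm = νp → νp = α → R (fun x => x ^ 2) - Δx ^ 3 / 12 = 0) :=
  dgcl_quadratic_test_function_general Δx Δt νm νp α xm xp hxm hxp xsm xsp hxsm hxsp R hR
end

section
/- Exact solution of the variable-coefficient transport equation: define u : (0, π) × ℝ → ℝ by u(x,t) = sin( 2·arctan( e^{−t}·tan(x/2) ) ) / sin(x). Then u is differentiable on (0, π) × ℝ, it satisfies the conservation-law form ∂_t u(x,t) + ∂_x ( sin(x)·u(x,t) ) = 0 for all x ∈ (0, π) and t ∈ ℝ, and it satisfies the initial condition u(x,0) = 1 for all x ∈ (0, π). -/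
/-!
Let `θ(x, t) = 2 arctan (e^{-t} tan (x/2))`, the point at time `0` of the characteristic
`ẋ = sin x` through `(x, t)`. One computes `∂ₜθ = -sin θ` and `∂ₓθ = sin θ / sin x = u`.
Hence the flux is `sin x · u = sin θ`, and by the chain rule
`∂ₜu = -cos θ sin θ / sin x = -∂ₓ (sin θ)`. At `t = 0`, `θ = x`, so `u = 1`.
-/

open Real Topology

lemma sin_two_mul_arctan (s : ℝ) : sin (2 * arctan s) = 2 * s / (1 + s ^ 2) := by
  have hsqrt : √(1 + s ^ 2) ^ 2 = 1 + s ^ 2 := sq_sqrt (by positivity)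
  rw [sin_two_mul, sin_arctan, cos_arctan]
  field_simp
  rw [hsqrt]

lemma sin_eq_two_mul_sin_half_mul_cos_half (x : ℝ) : sin x = 2 * sin (x / 2) * cos (x / 2) := by
  rw [← sin_two_mul, mul_div_cancel₀ x two_ne_zero]

lemma cos_half_ne_zero_of_sin_ne_zero {x : ℝ} (hx : sin x ≠ 0) : cos (x / 2) ≠ 0 := fun h =>
  hx (by rw [sin_eq_two_mul_sin_half_mul_cos_half, h, mul_zero])

lemma hasDerivAt_two_mul_arctan_exp_neg_mul (a t : ℝ) :
    HasDerivAt (fun τ => 2 * arctan (exp (-τ) * a)) (-sin (2 * arctan (exp (-t) * a))) t := by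
  have hexp : HasDerivAt (fun τ => exp (-τ) * a) (-(exp (-t) * a)) t := by
    simpa using (hasDerivAt_neg t).exp.mul_const a
  refine (hexp.arctan.const_mul 2).congr_deriv ?_
  rw [sin_two_mul_arctan]
  ring

lemma hasDerivAt_two_mul_arctan_mul_tan_half (c : ℝ) {x : ℝ} (hx : sin x ≠ 0) :
    HasDerivAt (fun y => 2 * arctan (c * tan (y / 2)))
      (sin (2 * arctan (c * tan (x / 2))) / sin x) x := by
  have hcos := cos_half_ne_zero_of_sin_ne_zero hx
  have hsin_half : sin (x / 2) ≠ 0 := fun h =>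
    hx (by rw [sin_eq_two_mul_sin_half_mul_cos_half, h, mul_zero, zero_mul])
  have htan : HasDerivAt (fun y => tan (y / 2)) (1 / cos (x / 2) ^ 2 * (1 / 2)) x :=
    (hasDerivAt_tan hcos).comp (h₂ := tan) x ((hasDerivAt_id' x).div_const 2)
  refine ((htan.const_mul c).arctan.const_mul 2).congr_deriv ?_
  rw [sin_two_mul_arctan, sin_eq_two_mul_sin_half_mul_cos_half, tan_eq_sin_div_cos]
  field_simp

lemma differentiableAt_sin_two_mul_arctan_exp_neg_mul_tan_half_div_sin {x : ℝ} (hx : sin x ≠ 0)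
    (t : ℝ) :
    DifferentiableAt ℝ
      (fun p : ℝ × ℝ => sin (2 * arctan (exp (-p.2) * tan (p.1 / 2))) / sin p.1) (x, t) := by
  have htan : DifferentiableAt ℝ (fun p : ℝ × ℝ => tan (p.1 / 2)) (x, t) :=
    (differentiableAt_tan.mpr (cos_half_ne_zero_of_sin_ne_zero hx)).comp (x, t)
      (f := fun p : ℝ × ℝ => p.1 / 2) (by fun_prop)
  have harctan : DifferentiableAt ℝ (fun p : ℝ × ℝ => arctan (exp (-p.2) * tan (p.1 / 2))) (x, t) :=
    DifferentiableAt.arctan (by fun_prop)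
  fun_prop (disch := assumption)

open Real in
/-- Exact solution of the variable-coefficient transport equation
`uₜ + (sin(x)·u)ₓ = 0` with `u(x,0) = 1` on `(0, π)`:
`u(x,t) = sin(2·arctan(e^{−t}·tan(x/2)))/sin(x)`. -/
theorem exact_solution_variable_coefficient
    (u : ℝ → ℝ → ℝ)
    (hu : u = fun x t => Real.sin (2 * Real.arctan (Real.exp (-t) * Real.tan (x / 2))) / Real.sin x) :
    ∀ x ∈ Set.Ioo (0:ℝ) Real.pi, ∀ t : ℝ,
      DifferentiableAt ℝ (fun p : ℝ × ℝ => u p.1 p.2) (x, t) ∧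
      deriv (fun τ => u x τ) t + deriv (fun y => Real.sin y * u y t) x = 0 ∧
      u x 0 = 1 := by
  rintro x ⟨hx0, hxπ⟩ t
  have hsin : sin x ≠ 0 := (sin_pos_of_pos_of_lt_pi hx0 hxπ).ne'
  subst hu
  refine ⟨differentiableAt_sin_two_mul_arctan_exp_neg_mul_tan_half_div_sin hsin t, ?_, ?_⟩
  · set θ := 2 * arctan (exp (-t) * tan (x / 2))
    have hu_t : HasDerivAt (fun τ => sin (2 * arctan (exp (-τ) * tan (x / 2))) / sin x)
        (cos θ * -sin θ / sin x) t :=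
      (hasDerivAt_two_mul_arctan_exp_neg_mul _ t).sin.div_const _
    have hflux : (fun y => sin y * (sin (2 * arctan (exp (-t) * tan (y / 2))) / sin y))
        =ᶠ[𝓝 x] fun y => sin (2 * arctan (exp (-t) * tan (y / 2))) := by
      filter_upwards [continuous_sin.continuousAt.eventually_ne hsin] with y hy
      exact mul_div_cancel₀ _ hy
    have hflux_x := (hasDerivAt_two_mul_arctan_mul_tan_half (exp (-t)) hsin).sin
    rw [hu_t.deriv, hflux.deriv_eq, hflux_x.deriv]
    ring
  · simp only [neg_zero, exp_zero, one_mul]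
    rw [arctan_tan (by linarith) (by linarith), mul_div_cancel₀ x two_ne_zero, div_self hsin]
end
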